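/- arXiv:2208.10967 — 4 statements merged into one kernel-verified Lean document; each statement's English description precedes it below -/
import Mathlib

section
/- If the decision threshold ĉ is normally distributed with mean μ_h and variance σ_h², then the expected 0-1 error E[½(1 + Φ(ĉ − μ) − Φ(ĉ + μ))] equals ½[Φ((μ_h − μ)/√(1 + σ_h²)) + Φ((−μ_h − μ)/√(1 + σ_h²))]. -/
open MeasureTheory Real Filter
open scoped NNReal ENNReal
noncomputable def phi (x : ℝ) : ℝ := (Real.sqrt (2*Real.pi))⁻¹ * Real.exp (-x^2/2)
noncomputable def Phi (t : ℝ) : ℝ := ∫ x in Set.Iio t, phi x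

open ProbabilityTheory


lemma phi_eq (x : ℝ) : phi x = gaussianPDFReal 0 1 x := by
  simp [phi, gaussianPDFReal]

lemma phi_nonneg (x : ℝ) : 0 ≤ phi x := by
  unfold phi; positivity

lemma continuous_phi : Continuous phi := by
  unfold phi; fun_prop

lemma integrable_phi : Integrable phi := by
  simp only [funext phi_eq]; exact integrable_gaussianPDFReal 0 1

lemma integral_phi : ∫ x, phi x = 1 := by
  simp only [funext phi_eq]; exact integral_gaussianPDFReal_eq_one 0 one_ne_zero

lemma Phi_nonneg (t : ℝ) : 0 ≤ Phi t :=
  setIntegral_nonneg measurableSet_Iio (fun x _ => phi_nonneg x)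

lemma Phi_le_one (t : ℝ) : Phi t ≤ 1 := by
  rw [← integral_phi]
  exact setIntegral_le_integral integrable_phi (ae_of_all _ phi_nonneg)

lemma Phi_mono : Monotone Phi := fun a b hab =>
  setIntegral_mono_set integrable_phi.integrableOn (ae_of_all _ phi_nonneg)
    (HasSubset.Subset.eventuallyLE (Set.Iio_subset_Iio hab))

lemma measurable_Phi : Measurable Phi := Phi_mono.measurable

lemma setIntegral_pdf (m : ℝ) {v : ℝ≥0} (hv : v ≠ 0) (s : Set ℝ) :
    ∫ x in s, gaussianPDFReal m v x = ((gaussianReal m v) s).toReal := by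
  rw [gaussianReal_apply_eq_integral m hv s, ENNReal.toReal_ofReal
    (integral_nonneg (fun x => gaussianPDFReal_nonneg m v x))]

lemma Phi_eq_measure (t : ℝ) : Phi t = ((gaussianReal 0 1) (Set.Iio t)).toReal := by
  rw [Phi, ← setIntegral_pdf 0 one_ne_zero]
  exact setIntegral_congr_fun measurableSet_Iio fun x _ => phi_eq x

lemma Phi_add_Phi_neg (u : ℝ) : Phi u + Phi (-u) = 1 := by
  have hmap : (gaussianReal 0 1).map (fun y => (-1 : ℝ) * y) = gaussianReal 0 1 := by
    rw [gaussianReal_map_const_mul (-1)]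
    norm_num
  have h2 : (gaussianReal 0 1) (Set.Iio (-u)) = (gaussianReal 0 1) (Set.Ioi u) := by
    conv_lhs => rw [← hmap]
    rw [Measure.map_apply (by fun_prop) measurableSet_Iio]
    congr 1
    ext y
    simp
  have h3 : (gaussianReal 0 1) (Set.Iio u) + (gaussianReal 0 1) (Set.Ioi u) = 1 := by
    rw [← measure_union (by simp [Set.disjoint_left]; intros; linarith) measurableSet_Ioi, Set.Iio_union_Ioi,
      measure_compl (measurableSet_singleton u) (measure_ne_top _ _),
      (gaussianReal_absolutelyContinuous 0 one_ne_zero) (measure_singleton u)]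
    simp
  rw [Phi_eq_measure, Phi_eq_measure, h2, ← ENNReal.toReal_add (measure_ne_top _ _) (measure_ne_top _ _), h3]
  simp

lemma gauss_Iio_scale {t : ℝ} (ht : 0 < t) (m a : ℝ) :
    (gaussianReal (-m) ((1 + t).toNNReal)) (Set.Iio a)
      = (gaussianReal 0 1) (Set.Iio ((a + m) / Real.sqrt (1 + t))) := by
  have h1t : (0:ℝ) < 1 + t := by linarith
  set s := Real.sqrt (1 + t) with hs
  have hs0 : 0 < s := Real.sqrt_pos.mpr h1t
  have hmap1 : (gaussianReal 0 1).map (fun y => s * y) = gaussianReal 0 ((1+t).toNNReal) := by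
    rw [gaussianReal_map_const_mul s]
    norm_num
    congr 1
    ext
    simp [Real.sq_sqrt h1t.le, Real.toNNReal, max_eq_left h1t.le]
    exact Real.sq_sqrt h1t.le
  have hmap2 : (gaussianReal 0 ((1+t).toNNReal)).map (fun y => y + (-m)) = gaussianReal (-m) ((1+t).toNNReal) := by
    rw [gaussianReal_map_add_const (-m)]
    norm_num
  rw [← hmap2, ← hmap1, Measure.map_map (by fun_prop) (by fun_prop),
    Measure.map_apply (by fun_prop) measurableSet_Iio]
  congr 1
  ext y
  simp only [Function.comp, Set.mem_preimage, Set.mem_Iio]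
  rw [lt_div_iff₀ hs0]
  constructor <;> intro h <;> nlinarith

lemma gauss_conv {t : ℝ} (ht : 0 < t) (m x : ℝ) :
    ∫ c, phi (x + c) * ((Real.sqrt (2*Real.pi*t))⁻¹ * Real.exp (-(c-m)^2/(2*t)))
      = (Real.sqrt (2*Real.pi*(1+t)))⁻¹ * Real.exp (-(x+m)^2/(2*(1+t))) := by
  have h1t : (0:ℝ) < 1 + t := by linarith
  have hπ : (0:ℝ) < Real.pi := Real.pi_pos
  set A : ℝ := (1+t)/(2*t) with hA
  have hA0 : 0 < A := by positivity
  set B : ℝ := (m - t*x)/(1+t) with hB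
  set C : ℝ := (Real.sqrt (2*Real.pi))⁻¹ * (Real.sqrt (2*Real.pi*t))⁻¹
      * Real.exp (-(x+m)^2/(2*(1+t))) with hC
  have key : ∀ c : ℝ, phi (x + c) * ((Real.sqrt (2*Real.pi*t))⁻¹ * Real.exp (-(c-m)^2/(2*t)))
      = C * Real.exp (-A * (c - B)^2) := by
    intro c
    rw [phi, hC]
    rw [show (Real.sqrt (2*Real.pi))⁻¹ * Real.exp (-(x+c)^2/2) *
        ((Real.sqrt (2*Real.pi*t))⁻¹ * Real.exp (-(c-m)^2/(2*t)))
      = (Real.sqrt (2*Real.pi))⁻¹ * (Real.sqrt (2*Real.pi*t))⁻¹ *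
        (Real.exp (-(x+c)^2/2) * Real.exp (-(c-m)^2/(2*t))) by ring,
      ← Real.exp_add]
    have hexp : -(x+c)^2/2 + -(c-m)^2/(2*t) = -(x+m)^2/(2*(1+t)) + -A * (c - B)^2 := by
      rw [hA, hB]
      field_simp
      ring
    rw [hexp, Real.exp_add]
    ring
  simp only [key]
  rw [integral_const_mul]
  rw [show (fun c : ℝ => Real.exp (-A * (c - B)^2)) = (fun c => (fun u => Real.exp (-A * u^2)) (c - B)) by rfl] -- noop
  rw [integral_sub_right_eq_self (fun u => Real.exp (-A * u^2)) B, integral_gaussian A]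
  rw [hC]
  have hconst : (Real.sqrt (2*Real.pi))⁻¹ * (Real.sqrt (2*Real.pi*t))⁻¹ * Real.sqrt (π / A)
      = (Real.sqrt (2*Real.pi*(1+t)))⁻¹ := by
    rw [← Real.sqrt_inv, ← Real.sqrt_inv, ← Real.sqrt_mul (by positivity),
      ← Real.sqrt_mul (by positivity), ← Real.sqrt_inv]
    congr 1
    rw [hA]
    field_simp
  rw [← hconst]
  ring

lemma expected_Phi {t : ℝ} (ht : 0 < t) (m a : ℝ) :
    ∫ c, Phi (c + a) ∂(gaussianReal m (t.toNNReal))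
      = Phi ((m + a) / Real.sqrt (1 + t)) := by
  have h1t : (0:ℝ) < 1 + t := by linarith
  have hv : (t.toNNReal : ℝ≥0) ≠ 0 := (Real.toNNReal_pos.mpr ht).ne'
  have hV : ((1+t).toNNReal : ℝ≥0) ≠ 0 := (Real.toNNReal_pos.mpr h1t).ne'
  have hvc : ((t.toNNReal : ℝ≥0) : ℝ) = t := Real.coe_toNNReal t ht.le
  have hVc : (((1+t).toNNReal : ℝ≥0) : ℝ) = 1 + t := Real.coe_toNNReal _ h1t.le
  set v : ℝ≥0 := t.toNNReal with hvdef
  set g : ℝ → ℝ := gaussianPDFReal m v with hg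
  have hg_eq : ∀ c, g c = (Real.sqrt (2*Real.pi*t))⁻¹ * Real.exp (-(c-m)^2/(2*t)) := by
    intro c; rw [hg, gaussianPDFReal, hvc]
  have hg_nonneg : ∀ c, 0 ≤ g c := fun c => gaussianPDFReal_nonneg m v c
  have hg_meas : Measurable g := measurable_gaussianPDFReal m v
  have hg_int : Integrable g := integrable_gaussianPDFReal m v
  -- step 1 : density
  have step1 : ∫ c, Phi (c + a) ∂(gaussianReal m v)
      = ∫ c, g c * Phi (c + a) := by
    rw [gaussianReal_of_var_ne_zero m hv]
    have : (gaussianPDF m v) = fun c => (((g c).toNNReal : ℝ≥0) : ℝ≥0∞) := by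
      funext c; rfl
    rw [this, integral_withDensity_eq_integral_smul (hg_meas.real_toNNReal) _]
    congr 1; funext c
    rw [NNReal.smul_def, Real.coe_toNNReal _ (hg_nonneg c), smul_eq_mul]
  -- step 2 : Phi as inner integral
  set H : ℝ → ℝ → ℝ := fun c x => Set.indicator (Set.Iio a) (fun y => phi (y + c) * g c) x
    with hH
  have hH_nonneg : ∀ c x, 0 ≤ H c x := by
    intro c x
    exact Set.indicator_nonneg (fun y _ => mul_nonneg (phi_nonneg _) (hg_nonneg c)) x
  have step2 : ∀ c, g c * Phi (c + a) = ∫ x, H c x := by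
    intro c
    rw [Phi, ← integral_indicator measurableSet_Iio,
      ← integral_add_right_eq_self (fun x => Set.indicator (Set.Iio (c+a)) phi x) c,
      ← integral_const_mul]
    congr 1; funext x
    by_cases hx : x < a
    · have h2 : x + c ∈ Set.Iio (c+a) := by simp only [Set.mem_Iio]; linarith
      simp only [hH, Set.indicator_of_mem h2, Set.indicator_of_mem (Set.mem_Iio.mpr hx)]
      ring
    · have h2 : x + c ∉ Set.Iio (c+a) := by
        simp only [Set.mem_Iio]; intro h; exact hx (by linarith)
      simp only [hH, Set.indicator_of_notMem h2,
        Set.indicator_of_notMem (by simpa using hx : x ∉ Set.Iio a)]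
      ring
  -- measurability on product
  have hHmeas : AEStronglyMeasurable (fun p : ℝ × ℝ => H p.1 p.2) (volume.prod volume) := by
    have heq : (fun p : ℝ × ℝ => H p.1 p.2)
        = Set.indicator {p : ℝ × ℝ | p.2 < a} (fun p => phi (p.2 + p.1) * g p.1) := by
      funext p
      by_cases h : p.2 < a <;> simp [hH, Set.indicator, h]
    rw [heq]
    refine (Measurable.indicator ?_ ?_).aestronglyMeasurable
    · exact (continuous_phi.measurable.comp (by fun_prop)).mul (hg_meas.comp measurable_fst)
    · exact measurable_snd measurableSet_Iio
  have hint : Integrable (fun p : ℝ × ℝ => H p.1 p.2) (volume.prod volume) := by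
    rw [integrable_prod_iff hHmeas]
    constructor
    · refine ae_of_all _ fun c => ?_
      exact ((integrable_phi.comp_add_right c).mul_const (g c)).indicator measurableSet_Iio
    · refine Integrable.mono' hg_int hHmeas.norm.integral_prod_right' (ae_of_all _ fun c => ?_)
      have h1 : ∀ x, ‖H c x‖ = H c x := fun x => Real.norm_of_nonneg (hH_nonneg c x)
      simp only [h1]
      rw [Real.norm_of_nonneg (integral_nonneg (hH_nonneg c))]
      have hle : ∀ x, H c x ≤ phi (x + c) * g c := by
        intro x
        exact Set.indicator_le_self' (fun y _ => mul_nonneg (phi_nonneg _) (hg_nonneg c)) x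
      calc ∫ x, H c x ≤ ∫ x, phi (x + c) * g c :=
            integral_mono (((integrable_phi.comp_add_right c).mul_const (g c)).indicator
              measurableSet_Iio) ((integrable_phi.comp_add_right c).mul_const (g c)) hle
        _ = (∫ x, phi (x + c)) * g c := integral_mul_const _ _
        _ = g c := by rw [integral_add_right_eq_self phi c, integral_phi, one_mul]
  -- swap
  have step4 : ∫ c, ∫ x, H c x = ∫ x, ∫ c, H c x := integral_integral_swap hint
  -- inner integral
  have step5 : ∀ x, (∫ c, H c x)
      = Set.indicator (Set.Iio a) (gaussianPDFReal (-m) ((1+t).toNNReal)) x := by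
    intro x
    by_cases hx : x < a
    · rw [Set.indicator_of_mem (Set.mem_Iio.mpr hx)]
      have : ∀ c, H c x = phi (x + c) * ((Real.sqrt (2*Real.pi*t))⁻¹
          * Real.exp (-(c-m)^2/(2*t))) := by
        intro c
        simp only [hH, Set.indicator_of_mem (Set.mem_Iio.mpr hx), hg_eq c]
      simp only [this]
      rw [gauss_conv ht m x, gaussianPDFReal, hVc]
      ring_nf
    · simp only [hH, Set.indicator_of_notMem (by simpa using hx : x ∉ Set.Iio a),
        integral_zero]
  rw [step1]
  simp only [step2]
  rw [step4]
  simp only [step5]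
  rw [integral_indicator measurableSet_Iio, setIntegral_pdf (-m) hV,
    gauss_Iio_scale ht m a, ← Phi_eq_measure, add_comm a m]

theorem stmt1 (μ μh σh : ℝ) (hμ : 0 < μ) (hσ : 0 < σh) :
    (∫ c, (1 / 2) * (1 + Phi (c - μ) - Phi (c + μ))
        ∂(ProbabilityTheory.gaussianReal μh ((σh ^ 2).toNNReal))) =
      (1 / 2) * (Phi ((μh - μ) / Real.sqrt (1 + σh ^ 2))
               + Phi ((-μh - μ) / Real.sqrt (1 + σh ^ 2))) := by
  have ht : (0:ℝ) < σh ^ 2 := by positivity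
  set ν := ProbabilityTheory.gaussianReal μh ((σh ^ 2).toNNReal) with hν
  have hP : IsProbabilityMeasure ν := by rw [hν]; infer_instance
  have hintA : ∀ a : ℝ, Integrable (fun c => Phi (c + a)) ν := by
    intro a
    refine Integrable.mono' (integrable_const 1)
      ((measurable_Phi.comp (by fun_prop)).aestronglyMeasurable) (ae_of_all _ fun c => ?_)
    rw [Real.norm_of_nonneg (Phi_nonneg _)]
    exact Phi_le_one _
  have h1 : ∫ c, Phi (c + (-μ)) ∂ν = Phi ((μh - μ) / Real.sqrt (1 + σh ^ 2)) := by
    rw [hν, expected_Phi ht μh (-μ)]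
    norm_num [sub_eq_add_neg]
  have h2 : ∫ c, Phi (c + μ) ∂ν = Phi ((μh + μ) / Real.sqrt (1 + σh ^ 2)) := by
    rw [hν, expected_Phi ht μh μ]
  have hsplit : (∫ c, (1 / 2) * (1 + Phi (c - μ) - Phi (c + μ)) ∂ν)
      = (1/2) * (1 + (∫ c, Phi (c + (-μ)) ∂ν) - ∫ c, Phi (c + μ) ∂ν) := by
    rw [integral_const_mul]
    congr 1
    simp only [sub_eq_add_neg]
    have i1 : Integrable (fun c => 1 + Phi (c + -μ)) ν := (integrable_const 1).add (hintA (-μ))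
    have i2 : Integrable (fun c => -Phi (c + μ)) ν := (hintA μ).neg
    rw [integral_add i1 i2, integral_add (integrable_const 1) (hintA (-μ)), integral_neg,
      integral_const]
    simp
  rw [hsplit, h1, h2]
  have hcomp := Phi_add_Phi_neg ((μh + μ) / Real.sqrt (1 + σh ^ 2))
  have hneg : -((μh + μ) / Real.sqrt (1 + σh ^ 2)) = (-μh - μ) / Real.sqrt (1 + σh ^ 2) := by
    ring
  rw [hneg] at hcomp
  linarith
end

section
/- The derivative of MSE(m) = (mΔ/(n+m))² + 1/(n+m) with respect to m at m = 0 equals −1/n², which is negative; hence adding a small amount of OOD data always decreases the MSE of the threshold regardless of the shift Δ. -/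
open MeasureTheory Real Filter
open scoped NNReal ENNReal
theorem stmt9 (n Δ : ℝ) (hn : 1 ≤ n) :
    HasDerivAt (fun m : ℝ => ((m * Δ) / (n + m)) ^ 2 + 1 / (n + m)) (-(1 / n ^ 2)) 0 ∧
    -(1 / n ^ 2) < 0 := by
  have hn0 : (0:ℝ) < n := lt_of_lt_of_le one_pos hn
  have hne : n + (0:ℝ) ≠ 0 := by linarith
  have h1 : HasDerivAt (fun m : ℝ => m * Δ) Δ 0 := by
    simpa using (hasDerivAt_id (0:ℝ)).mul_const Δ
  have h2 : HasDerivAt (fun m : ℝ => n + m) 1 0 := by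
    simpa using (hasDerivAt_id (0:ℝ)).const_add n
  have hq : HasDerivAt (fun m : ℝ => (m * Δ) / (n + m))
      ((Δ * (n + 0) - (0 * Δ) * 1) / (n + 0) ^ 2) 0 := h1.div h2 hne
  have hp : HasDerivAt (fun m : ℝ => ((m * Δ) / (n + m)) ^ 2)
      (2 * ((0 * Δ) / (n + 0)) ^ 1 * ((Δ * (n + 0) - (0 * Δ) * 1) / (n + 0) ^ 2)) 0 := by
    simpa using hq.fun_pow 2
  have hinv : HasDerivAt (fun m : ℝ => 1 / (n + m))
      ((0 * (n + 0) - 1 * 1) / (n + 0) ^ 2) 0 :=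
    (hasDerivAt_const (0:ℝ) 1).div h2 hne
  constructor
  · have := hp.fun_add hinv
    convert this using 1
    · rfl
    · rfl
    · ring
  · have : 0 < 1 / n ^ 2 := by positivity
    linarith
end

section
/- Define F(α) = 4√(α²/n + (1−α)²/m)·C + 2(1−α)·D for constants C > 0, D ≥ 0 and n, m > 0, and let ρ = C/D (for D > 0). If n ≥ 4ρ², then F is minimized over α ∈ [0,1] at α* = 1; otherwise the minimizer is α* = (n/(n+m))·(1 + √(m²/(4ρ²(n+m) − nm))). -/
open MeasureTheory Real Filter
open scoped NNReal ENNReal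
noncomputable def F (n m C D α : ℝ) : ℝ :=
  4 * Real.sqrt (α ^ 2 / n + (1 - α) ^ 2 / m) * C + 2 * (1 - α) * D

/-! `α ↦ √(α²/n + (1-α)²/m)` is a Euclidean norm composed with an affine map, so `F` is convex
and lies above each of its tangent lines; Cauchy–Schwarz supplies them explicitly. If
`n ≥ 4 (C/D)²` the tangent at `α = 1` has nonpositive slope, so `α = 1` minimizes `F` on
`α ≤ 1`. Otherwise the tangent at the stated `α*` is horizontal, so `α*` minimizes `F` on all
of `ℝ`. -/

lemma mul_div_add_mul_div_le_sqrt_mul_sqrt {n m : ℝ} (hn : 0 ≤ n) (hm : 0 ≤ m) (x y a b : ℝ) :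
    x * a / n + y * b / m ≤ √(x ^ 2 / n + y ^ 2 / m) * √(a ^ 2 / n + b ^ 2 / m) := by
  rw [← Real.sqrt_mul (by positivity)]
  apply Real.le_sqrt_of_sq_le
  have lagrange : (x ^ 2 / n + y ^ 2 / m) * (a ^ 2 / n + b ^ 2 / m) - (x * a / n + y * b / m) ^ 2
      = n⁻¹ * m⁻¹ * (x * b - y * a) ^ 2 := by ring
  have : 0 ≤ n⁻¹ * m⁻¹ * (x * b - y * a) ^ 2 := by positivity
  linarith

lemma sqrt_sq_div_add_one_sub_sq_div_pos {n m : ℝ} (hn : 0 < n) (hm : 0 < m) (β : ℝ) :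
    0 < √(β ^ 2 / n + (1 - β) ^ 2 / m) := by
  apply Real.sqrt_pos.mpr
  rcases eq_or_ne β 0 with rfl | hβ
  · norm_num [hm]
  · have : 0 < β ^ 2 := by positivity
    positivity

/-- The bracket is `F'(β)`. -/
lemma F_add_mul_slope_le {n m C : ℝ} (hn : 0 < n) (hm : 0 < m) (hC : 0 ≤ C) (D α β : ℝ) :
    F n m C D β + (α - β) *
      (4 * C * (β / n - (1 - β) / m) / √(β ^ 2 / n + (1 - β) ^ 2 / m) - 2 * D)
      ≤ F n m C D α := by
  have hG := sqrt_sq_div_add_one_sub_sq_div_pos hn hm β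
  set G := √(β ^ 2 / n + (1 - β) ^ 2 / m) with hG_def
  have hG2 : G ^ 2 = β ^ 2 / n + (1 - β) ^ 2 / m := Real.sq_sqrt (by positivity)
  have hlin : G + (α - β) * (β / n - (1 - β) / m) / G ≤ √(α ^ 2 / n + (1 - α) ^ 2 / m) := by
    calc G + (α - β) * (β / n - (1 - β) / m) / G
        = (α * β / n + (1 - α) * (1 - β) / m) / G := by
          rw [eq_div_iff hG.ne', add_mul, div_mul_cancel₀ _ hG.ne']
          linear_combination hG2
      _ ≤ √(α ^ 2 / n + (1 - α) ^ 2 / m) :=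
          div_le_of_le_mul₀ hG.le (Real.sqrt_nonneg _)
            (mul_div_add_mul_div_le_sqrt_mul_sqrt hn.le hm.le _ _ _ _)
  calc F n m C D β + (α - β) * (4 * C * (β / n - (1 - β) / m) / G - 2 * D)
      = 4 * C * (G + (α - β) * (β / n - (1 - β) / m) / G) + 2 * (1 - α) * D := by
        rw [F, ← hG_def]; ring
    _ ≤ 4 * C * √(α ^ 2 / n + (1 - α) ^ 2 / m) + 2 * (1 - α) * D := by gcongr
    _ = F n m C D α := by rw [F]; ring

lemma F_one_le {n m C D : ℝ} (hn : 0 < n) (hm : 0 < m) (hC : 0 < C) (hD : 0 < D)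
    (h : 4 * (C / D) ^ 2 ≤ n) {α : ℝ} (hα : α ≤ 1) : F n m C D 1 ≤ F n m C D α := by
  have hslope : 4 * C * √(1 / n) ≤ 2 * D := by
    have : √(1 / n) ≤ D / (2 * C) := by
      rw [Real.sqrt_le_left (by positivity)]
      calc 1 / n ≤ 1 / (4 * (C / D) ^ 2) := one_div_le_one_div_of_le (by positivity) h
        _ = (D / (2 * C)) ^ 2 := by field_simp; ring
    calc 4 * C * √(1 / n) ≤ 4 * C * (D / (2 * C)) := by gcongr
      _ = 2 * D := by field_simp; ring
  have tangent := F_add_mul_slope_le hn hm hC.le D α 1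
  simp only [one_pow, sub_self, ne_eq, OfNat.ofNat_ne_zero, not_false_eq_true, zero_pow,
    zero_div, add_zero, sub_zero, mul_div_assoc, div_sqrt] at tangent
  linarith [mul_nonneg_of_nonpos_of_nonpos (sub_nonpos.mpr hα) (sub_nonpos.mpr hslope)]

/-- With `s² + n m = 4 (C/D)² (n + m)`, the tangent of `F` at `n/(n+m) · (1 + m/s)` is
horizontal: there `β/n - (1-β)/m = 1/s` and `√(β²/n + (1-β)²/m) = 2C/(D s)`. -/
lemma F_le_of_sq_add_mul_eq {n m C D s : ℝ} (hn : 0 < n) (hm : 0 < m) (hC : 0 < C) (hD : 0 < D)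
    (hs : 0 < s) (hs2 : s ^ 2 + n * m = 4 * (C / D) ^ 2 * (n + m)) (α : ℝ) :
    F n m C D (n / (n + m) * (1 + m / s)) ≤ F n m C D α := by
  set β := n / (n + m) * (1 + m / s)
  have hnm : 0 < n + m := by positivity
  have hdiff : β / n - (1 - β) / m = 1 / s := by
    simp only [β]; field_simp; ring
  have hnorm : √(β ^ 2 / n + (1 - β) ^ 2 / m) = 2 * C / (D * s) := by
    rw [← Real.sqrt_sq (by positivity : 0 ≤ 2 * C / (D * s))]
    congr 1
    have hρ : 4 * C ^ 2 * (n + m) = D ^ 2 * (s ^ 2 + n * m) := by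
      rw [hs2]; field_simp
    simp only [β]; field_simp
    linear_combination (-(m * (n + m))) * hρ
  have tangent := F_add_mul_slope_le hn hm hC.le D α β
  rwa [hdiff, hnorm, show 4 * C * (1 / s) / (2 * C / (D * s)) - 2 * D = 0 by field_simp; ring,
    mul_zero, add_zero] at tangent

theorem stmt13 (n m C D : ℝ) (hn : 0 < n) (hm : 0 < m) (hC : 0 < C) (hD : 0 < D) :
    (4 * (C / D) ^ 2 ≤ n → ∀ α ∈ Set.Icc (0 : ℝ) 1, F n m C D 1 ≤ F n m C D α) ∧
    (n < 4 * (C / D) ^ 2 → ∀ α ∈ Set.Icc (0 : ℝ) 1,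
      F n m C D ((n / (n + m)) *
        (1 + Real.sqrt (m ^ 2 / (4 * (C / D) ^ 2 * (n + m) - n * m)))) ≤ F n m C D α) := by
  refine ⟨fun h α hα => F_one_le hn hm hC hD h hα.2, fun h α _ => ?_⟩
  set t := 4 * (C / D) ^ 2 * (n + m) - n * m
  have ht : 0 < t := by nlinarith [mul_pos hn (sub_pos.mpr h)]
  have hs : 0 < √t := Real.sqrt_pos.mpr ht
  have hsqrt : √(m ^ 2 / t) = m / √t := by
    rw [Real.sqrt_div' _ ht.le, Real.sqrt_sq hm.le]
  rw [hsqrt]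
  exact F_le_of_sq_add_mul_eq hn hm hC hD hs (by rw [Real.sq_sqrt ht.le]; ring) α
end

section
/- The combined error of the ideal joint hypothesis h*(x) = 1{x > Δ/2} for the target mixture (classes N(−μ,σ²), N(μ,σ²)) and the OOD mixture (shifted by Δ) equals λ = Φ((−Δ/2 − μ)/σ) + Φ((Δ/2 − μ)/σ). -/
open MeasureTheory Real Filter
open scoped NNReal ENNReal
lemma gauss_map (m σ : ℝ) (hσ : 0 < σ) :
    ProbabilityTheory.gaussianReal m ((σ ^ 2).toNNReal)
      = (ProbabilityTheory.gaussianReal 0 1).map (fun x => σ * x + m) := by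
  have h1 := ProbabilityTheory.gaussianReal_map_const_mul (μ := 0) (v := 1) σ
  have h2 := ProbabilityTheory.gaussianReal_map_add_const
    (μ := σ * 0) (v := NNReal.mk (σ ^ 2) (sq_nonneg σ) * 1) m
  rw [← h1] at h2
  rw [Measure.map_map (by fun_prop) (by fun_prop)] at h2
  have hv : (NNReal.mk (σ ^ 2) (sq_nonneg σ) * 1 : ℝ≥0) = (σ ^ 2).toNNReal := by
    ext; simp [Real.toNNReal, max_eq_left (sq_nonneg σ)]
  rw [hv, mul_zero, zero_add] at h2
  rw [← h2]
  rfl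

lemma gauss_pdf_eq : ProbabilityTheory.gaussianPDFReal 0 1 = phi := by
  ext x
  simp [ProbabilityTheory.gaussianPDFReal, phi]

lemma gauss_Iio (m σ t : ℝ) (hσ : 0 < σ) :
    ((ProbabilityTheory.gaussianReal m ((σ ^ 2).toNNReal)) (Set.Iio t)).toReal
      = Phi ((t - m) / σ) := by
  rw [gauss_map m σ hσ, Measure.map_apply (by fun_prop) measurableSet_Iio]
  have hpre : (fun x => σ * x + m) ⁻¹' Set.Iio t = Set.Iio ((t - m) / σ) := by
    ext x
    simp only [Set.mem_preimage, Set.mem_Iio]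
    rw [lt_div_iff₀ hσ]
    constructor <;> intro h <;> nlinarith
  rw [hpre, ProbabilityTheory.gaussianReal_apply_eq_integral 0 one_ne_zero,
    ENNReal.toReal_ofReal
      (integral_nonneg fun x => ProbabilityTheory.gaussianPDFReal_nonneg 0 1 x),
    gauss_pdf_eq, Phi]

lemma gauss_Ioi (m σ t : ℝ) (hσ : 0 < σ) :
    ((ProbabilityTheory.gaussianReal m ((σ ^ 2).toNNReal)) (Set.Ioi t)).toReal
      = Phi ((m - t) / σ) := by
  have h1 := ProbabilityTheory.gaussianReal_map_const_mul
    (μ := -m) (v := (σ ^ 2).toNNReal) (-1)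
  have hv : (NNReal.mk ((-1 : ℝ) ^ 2) (sq_nonneg _) * (σ ^ 2).toNNReal : ℝ≥0)
      = (σ ^ 2).toNNReal := by
    ext; norm_num
  rw [hv] at h1
  have h1' : ProbabilityTheory.gaussianReal m ((σ ^ 2).toNNReal)
      = (ProbabilityTheory.gaussianReal (-m) ((σ ^ 2).toNNReal)).map (fun x => -x) := by
    rw [show (fun x : ℝ => -x) = fun x : ℝ => (-1 : ℝ) * x by funext x; ring, h1]
    norm_num
  rw [h1', Measure.map_apply (by fun_prop) measurableSet_Ioi]
  have hpre : (fun x : ℝ => -x) ⁻¹' Set.Ioi t = Set.Iio (-t) := by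
    ext x; simp [Set.mem_Iio, lt_neg]
  rw [hpre, gauss_Iio (-m) σ (-t) hσ]
  ring_nf

theorem stmt15 (μ σ Δ : ℝ) (hμ : 0 < μ) (hσ : 0 < σ) :
    (((1 / 2) * ((ProbabilityTheory.gaussianReal (-μ) ((σ ^ 2).toNNReal)) (Set.Ioi (Δ / 2))).toReal +
      (1 / 2) * ((ProbabilityTheory.gaussianReal μ ((σ ^ 2).toNNReal)) (Set.Iio (Δ / 2))).toReal) +
     ((1 / 2) * ((ProbabilityTheory.gaussianReal (Δ - μ) ((σ ^ 2).toNNReal)) (Set.Ioi (Δ / 2))).toReal +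
      (1 / 2) * ((ProbabilityTheory.gaussianReal (Δ + μ) ((σ ^ 2).toNNReal)) (Set.Iio (Δ / 2))).toReal)) =
    Phi ((-Δ / 2 - μ) / σ) + Phi ((Δ / 2 - μ) / σ) := by
  rw [gauss_Iio μ σ (Δ / 2) hσ, gauss_Iio (Δ + μ) σ (Δ / 2) hσ,
    gauss_Ioi (-μ) σ (Δ / 2) hσ, gauss_Ioi (Δ - μ) σ (Δ / 2) hσ]
  have e1 : (-μ - Δ / 2) / σ = (-Δ / 2 - μ) / σ := by ring_nf
  have e2 : (Δ - μ - Δ / 2) / σ = (Δ / 2 - μ) / σ := by ring_nf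
  have e3 : (Δ / 2 - (Δ + μ)) / σ = (-Δ / 2 - μ) / σ := by ring_nf
  rw [e1, e2, e3]
  ring
end
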